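/- arXiv:2503.12607 — 2 statements merged into one kernel-verified Lean document; each statement's English description precedes it below -/
import Mathlib

section
/- Fix a real number a with 3/4 < a < 1. Consider bootstrap percolation on Q_n where each vertex is initially infected independently with probability p = n^{a-1} − n^{a/2 − 1}, and let the infection threshold be r = ⌈n^a⌉ + 3. Then there exists an absolute constant δ > 0 such that for all sufficiently large n and every vertex x ∈ V(Q_n), P(x ∈ A_{1,r}) ≥ δ. -/
/-!
A vertex `x` is infected at step one as soon as at least `r` of its `n` neighbours are initially
infected, and that number is binomial with mean `μ = n p = n^a - n^{a/2}` and standard deviation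
`σ ≈ n^{a/2}`, so `r ≈ μ + σ`. By Chebyshev's inequality, mass `8/9` lies within `3σ` of `μ`, on at
most `6σ + 1` values. Throughout that window the ratio of consecutive binomial weights,
`(n - k) p / ((k + 1)(1 - p))`, is within a factor `exp (6 / (σ - 3))` of `1`, so all weights there
are comparable up to `e^{72}`; each is therefore at least `e^{-72} (8/9) / (6σ + 1)`, and the `σ`
values in `[r, r + σ]` carry probability at least `(4/27) e^{-72}`.
-/

open Finset Filter
open scoped Classical

noncomputable section

/-- The infected set after `i` steps of `r`-neighbour bootstrap percolation on the graph `G`,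
starting from the initial infected set `A0`:
`A_{i+1} = A_i ∪ {v : |N(v) ∩ A_i| ≥ r}`. -/
def bootSets {V : Type*} [Fintype V] [DecidableEq V] (G : SimpleGraph V) (r : ℕ)
    (A0 : Finset V) : ℕ → Finset V
  | 0 => A0
  | i + 1 =>
      bootSets G r A0 i ∪
        Finset.univ.filter fun v => r ≤ (G.neighborFinset v ∩ bootSets G r A0 i).card

/-- `A0` percolates under the `r`-neighbour bootstrap process on `G`. -/
def percolates {V : Type*} [Fintype V] [DecidableEq V] (G : SimpleGraph V) (r : ℕ)
    (A0 : Finset V) : Prop :=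
  ∃ i, bootSets G r A0 i = Finset.univ

/-- The probability that the initial infected set is exactly `A`, when every vertex is
infected independently with probability `p`. -/
def configProb {V : Type*} [Fintype V] [DecidableEq V] (p : ℝ) (A : Finset V) : ℝ :=
  p ^ A.card * (1 - p) ^ (Fintype.card V - A.card)

/-- The probability of the event `E` about the initial infected set, when every vertex is
infected independently with probability `p`. -/
def probEvent {V : Type*} [Fintype V] [DecidableEq V] (p : ℝ) (E : Finset V → Prop) : ℝ :=
  ∑ A : Finset V, if E A then configProb p A else 0

/-- The generalized hypercube `Q_{k,n}`: vertices are `{0,1}^n`, two vertices being adjacent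
iff their Hamming distance is between `1` and `k`.  The usual hypercube `Q_n` is
`cubeGraph n 1`. -/
def cubeGraph (n k : ℕ) : SimpleGraph (Fin n → Bool) where
  Adj x y := 1 ≤ hammingDist x y ∧ hammingDist x y ≤ k
  symm := by
    constructor
    intro x y h
    rwa [hammingDist_comm]
  loopless := by
    constructor
    intro x h
    simp [hammingDist_self] at h

/-- The critical probability for `r`-neighbour bootstrap percolation on `Q_{k,n}` where every
vertex is initially infected independently with probability `p`:
the supremum of all `p ∈ (0,1)` for which percolation has probability at most `1/2`. -/
def critProb (n k r : ℕ) : ℝ :=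
  sSup {p : ℝ | p ∈ Set.Ioo (0 : ℝ) 1 ∧
    probEvent p (fun A0 => percolates (cubeGraph n k) r A0) ≤ 1 / 2}

/-- The `Boot1(t)` process with base threshold `r`: at step `1` the threshold is `r - t`,
afterwards it is `r`. -/
def boot1Sets {V : Type*} [Fintype V] [DecidableEq V] (G : SimpleGraph V) (r t : ℕ)
    (A0 : Finset V) : ℕ → Finset V
  | 0 => A0
  | 1 => A0 ∪ Finset.univ.filter fun v => r - t ≤ (G.neighborFinset v ∩ A0).card
  | i + 2 =>
      boot1Sets G r t A0 (i + 1) ∪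
        Finset.univ.filter fun v =>
          r ≤ (G.neighborFinset v ∩ boot1Sets G r t A0 (i + 1)).card

/-- The `Boot2(t)` (= `Boot3(t)`) process with base threshold `r`: at step `1` the threshold
is `r - 2t`, at step `2` it is `r - t`, and afterwards it is `r`. -/
def boot2Sets {V : Type*} [Fintype V] [DecidableEq V] (G : SimpleGraph V) (r t : ℕ)
    (A0 : Finset V) : ℕ → Finset V
  | 0 => A0
  | 1 => A0 ∪ Finset.univ.filter fun v => r - 2 * t ≤ (G.neighborFinset v ∩ A0).card
  | 2 =>
      boot2Sets G r t A0 1 ∪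
        Finset.univ.filter fun v =>
          r - t ≤ (G.neighborFinset v ∩ boot2Sets G r t A0 1).card
  | i + 3 =>
      boot2Sets G r t A0 (i + 2) ∪
        Finset.univ.filter fun v =>
          r ≤ (G.neighborFinset v ∩ boot2Sets G r t A0 (i + 2)).card

open Polynomial Real

-- `(bernsteinPolynomial ℝ n k).eval p` is the binomial probability `P(Bin(n, p) = k)`.
section Binomial

variable {n : ℕ} {p : ℝ}

lemma bernsteinPolynomial_eval_nonneg (hp₀ : 0 ≤ p) (hp₁ : p ≤ 1) (k : ℕ) :
    0 ≤ (bernsteinPolynomial ℝ n k).eval p := by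
  have := sub_nonneg.2 hp₁
  simp only [bernsteinPolynomial, eval_mul, eval_pow, eval_natCast, eval_X, eval_sub, eval_one]
  positivity

lemma sum_bernsteinPolynomial_eval (n : ℕ) (p : ℝ) :
    ∑ k ∈ range (n + 1), (bernsteinPolynomial ℝ n k).eval p = 1 := by
  simpa [eval_finsetSum] using congrArg (eval p) (bernsteinPolynomial.sum ℝ n)

lemma sum_sq_mul_bernsteinPolynomial_eval (n : ℕ) (p : ℝ) :
    ∑ k ∈ range (n + 1), (n * p - k) ^ 2 * (bernsteinPolynomial ℝ n k).eval p
      = n * p * (1 - p) := by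
  simpa [eval_finsetSum] using congrArg (eval p) (bernsteinPolynomial.variance ℝ n)

lemma bernsteinPolynomial_eval_succ_mul (n k : ℕ) (p : ℝ) :
    (bernsteinPolynomial ℝ n (k + 1)).eval p * ((k + 1) * (1 - p))
      = (bernsteinPolynomial ℝ n k).eval p * ((n - k) * p) := by
  rcases lt_or_ge k n with hk | hk
  · have hchoose : (n.choose (k + 1) : ℝ) * (k + 1) = n.choose k * (n - k) := by
      rw [← Nat.cast_sub hk.le]
      exact_mod_cast Nat.choose_succ_right_eq n k
    simp only [bernsteinPolynomial, eval_mul, eval_pow, eval_natCast, eval_X, eval_sub, eval_one]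
    rw [show n - k = n - (k + 1) + 1 by omega, pow_succ]
    linear_combination p ^ (k + 1) * (1 - p) ^ (n - (k + 1)) * (1 - p) * hchoose
  · rw [bernsteinPolynomial.eq_zero_of_lt ℝ (Nat.lt_succ_of_le hk)]
    obtain rfl | hk := hk.eq_or_lt
    · simp
    · simp [bernsteinPolynomial.eq_zero_of_lt ℝ hk]

lemma one_sub_inv_sq_le_sum_bernsteinPolynomial_eval (hp₀ : 0 ≤ p) (hp₁ : p ≤ 1) {c σ : ℝ}
    (hc : 0 < c) (hσ₀ : 0 < σ) (hσ : σ ^ 2 = n * p * (1 - p)) :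
    1 - 1 / c ^ 2 ≤
      ∑ k ∈ range (n + 1) with |n * p - (k : ℕ)| ≤ c * σ, (bernsteinPolynomial ℝ n k).eval p := by
  set b := fun k : ℕ ↦ (bernsteinPolynomial ℝ n k).eval p
  have hfar : (c * σ) ^ 2 * ∑ k ∈ range (n + 1) with ¬ |n * p - (k : ℕ)| ≤ c * σ, b k ≤ σ ^ 2 := by
    rw [hσ, ← sum_sq_mul_bernsteinPolynomial_eval, mul_sum]
    refine (sum_le_sum fun k hk ↦ ?_).trans
      (sum_le_sum_of_subset_of_nonneg (filter_subset _ _) fun k _ _ ↦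
        mul_nonneg (sq_nonneg _) (bernsteinPolynomial_eval_nonneg hp₀ hp₁ k))
    have hk : c * σ ≤ |n * p - k| := (not_le.1 (mem_filter.1 hk).2).le
    have hsq : (c * σ) ^ 2 ≤ (n * p - k) ^ 2 := by
      rw [← sq_abs (n * p - k)]
      gcongr
    exact mul_le_mul_of_nonneg_right hsq (bernsteinPolynomial_eval_nonneg hp₀ hp₁ k)
  have hsplit := sum_filter_add_sum_filter_not (range (n + 1)) (fun k : ℕ ↦ |n * p - k| ≤ c * σ) b
  rw [sum_bernsteinPolynomial_eval] at hsplit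
  have : ∑ k ∈ range (n + 1) with ¬ |n * p - (k : ℕ)| ≤ c * σ, b k ≤ 1 / c ^ 2 := by
    rw [le_div_iff₀ (by positivity)]
    nlinarith [hfar, sq_pos_of_pos hσ₀]
  linarith

lemma exp_neg_mul_le_of_mul_eq {x y A B u : ℝ} (hy : 0 ≤ y) (hA : 0 < A) (hB : 0 ≤ B)
    (hAB : A ≤ (1 + u) * B) (h : x * A = y * B) : exp (-u) * y ≤ x := by
  have hA' : exp (-u) * A ≤ B :=
    calc exp (-u) * A ≤ exp (-u) * (exp u * B) := by
          gcongr; exact hAB.trans (by gcongr; linarith [add_one_le_exp u])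
      _ = B := by rw [← mul_assoc, ← exp_add, neg_add_cancel, exp_zero, one_mul]
  refine le_of_mul_le_mul_right ?_ hA
  calc exp (-u) * y * A = y * (exp (-u) * A) := by ring
    _ ≤ y * B := by gcongr
    _ = x * A := h.symm

/-- Both `(k + 1) (1 - p) = σ² + (k + 1 - n p) (1 - p)` and `(n - k) p = σ² + (n p - k) p` lie in
`[σ² - 3σ, σ² + 3σ]`. -/
lemma bernsteinPolynomial_eval_succ_near_mean (hp₀ : 0 ≤ p) (hp₁ : p ≤ 1) {σ : ℝ} (hσ3 : 3 < σ)
    (hσ : σ ^ 2 = n * p * (1 - p)) {k : ℕ} (hlo : n * p - 3 * σ ≤ k)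
    (hhi : (k : ℝ) + 1 ≤ n * p + 3 * σ) :
    exp (-(6 / (σ - 3))) * (bernsteinPolynomial ℝ n k).eval p
        ≤ (bernsteinPolynomial ℝ n (k + 1)).eval p ∧
      exp (-(6 / (σ - 3))) * (bernsteinPolynomial ℝ n (k + 1)).eval p
        ≤ (bernsteinPolynomial ℝ n k).eval p := by
  have hwidth : σ ^ 2 + 3 * σ = (1 + 6 / (σ - 3)) * (σ ^ 2 - 3 * σ) := by
    field_simp [(by linarith : σ - 3 ≠ 0)]
    ring
  have hpos : 0 < σ ^ 2 - 3 * σ := by nlinarith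
  have hA₁ : σ ^ 2 - 3 * σ ≤ (k + 1) * (1 - p) := by nlinarith
  have hA₂ : (k + 1) * (1 - p) ≤ σ ^ 2 + 3 * σ := by nlinarith
  have hB₁ : σ ^ 2 - 3 * σ ≤ (n - k) * p := by nlinarith
  have hB₂ : (n - k) * p ≤ σ ^ 2 + 3 * σ := by nlinarith
  have h := bernsteinPolynomial_eval_succ_mul n k p
  constructor
  · refine exp_neg_mul_le_of_mul_eq (bernsteinPolynomial_eval_nonneg hp₀ hp₁ k)
      (by linarith) (by linarith) ?_ h
    nlinarith
  · refine exp_neg_mul_le_of_mul_eq (bernsteinPolynomial_eval_nonneg hp₀ hp₁ (k + 1))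
      (by linarith) (by linarith) ?_ h.symm
    nlinarith

lemma pow_sub_mul_le_of_forall_mul_le {f : ℕ → ℝ} {e : ℝ} (he : 0 ≤ e) {j k : ℕ} (hjk : j ≤ k)
    (hup : ∀ i, j ≤ i → i < k → e * f i ≤ f (i + 1))
    (hdown : ∀ i, j ≤ i → i < k → e * f (i + 1) ≤ f i) :
    e ^ (k - j) * f j ≤ f k ∧ e ^ (k - j) * f k ≤ f j := by
  induction k, hjk using Nat.le_induction with
  | base => simp
  | succ k hjk ih =>
    obtain ⟨ih₁, ih₂⟩ := ih (fun i hi hik ↦ hup i hi (by omega))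
      (fun i hi hik ↦ hdown i hi (by omega))
    rw [Nat.sub_add_comm hjk, pow_succ]
    constructor
    · calc e ^ (k - j) * e * f j = e * (e ^ (k - j) * f j) := by ring
        _ ≤ e * f k := by gcongr
        _ ≤ f (k + 1) := hup k hjk k.lt_succ_self
    · calc e ^ (k - j) * e * f (k + 1) = e ^ (k - j) * (e * f (k + 1)) := by ring
        _ ≤ e ^ (k - j) * f k := by gcongr; exact hdown k hjk k.lt_succ_self
        _ ≤ f j := ih₂

lemma exp_neg_mul_bernsteinPolynomial_eval_le (hp₀ : 0 ≤ p) (hp₁ : p ≤ 1) {σ : ℝ} (hσ6 : 6 ≤ σ)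
    (hσ : σ ^ 2 = n * p * (1 - p)) {j k : ℕ} (hj : |n * p - j| ≤ 3 * σ)
    (hk : |n * p - k| ≤ 3 * σ) :
    exp (-72) * (bernsteinPolynomial ℝ n j).eval p ≤ (bernsteinPolynomial ℝ n k).eval p := by
  set b := fun k : ℕ ↦ (bernsteinPolynomial ℝ n k).eval p
  suffices key : ∀ j k : ℕ, j ≤ k → |n * p - j| ≤ 3 * σ → |n * p - k| ≤ 3 * σ →
      exp (-72) * b j ≤ b k ∧ exp (-72) * b k ≤ b j by
    rcases le_total j k with hjk | hkj
    · exact (key j k hjk hj hk).1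
    · exact (key k j hkj hk hj).2
  intro j k hjk hj hk
  rw [abs_le] at hj hk
  have hwindow : ∀ i, j ≤ i → i < k → n * p - 3 * σ ≤ i ∧ (i : ℝ) + 1 ≤ n * p + 3 * σ := by
    intro i hi hik
    have hi' : (j : ℝ) ≤ i := by exact_mod_cast hi
    have hik' : (i : ℝ) + 1 ≤ k := by exact_mod_cast hik
    constructor <;> linarith
  have hstep := fun i hi hik ↦ bernsteinPolynomial_eval_succ_near_mean hp₀ hp₁ (by linarith) hσ
    (hwindow i hi hik).1 (hwindow i hi hik).2
  obtain ⟨hup, hdown⟩ := pow_sub_mul_le_of_forall_mul_le (f := b) (exp_pos _).le hjk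
    (fun i hi hik ↦ (hstep i hi hik).1) (fun i hi hik ↦ (hstep i hi hik).2)
  have hdist : ((k - j : ℕ) : ℝ) ≤ 6 * σ := by rw [Nat.cast_sub hjk]; linarith
  have hexp : exp (-72) ≤ exp (-(6 / (σ - 3))) ^ (k - j) := by
    rw [← exp_nat_mul, exp_le_exp, mul_neg, neg_le_neg_iff]
    calc (k - j : ℕ) * (6 / (σ - 3)) ≤ 6 * σ * (6 / (σ - 3)) :=
          mul_le_mul_of_nonneg_right hdist (div_nonneg (by norm_num) (by linarith))
      _ ≤ 72 := by rw [mul_div_assoc', div_le_iff₀ (by linarith)]; nlinarith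
  have hb : ∀ i, 0 ≤ b i := bernsteinPolynomial_eval_nonneg hp₀ hp₁
  exact ⟨(mul_le_mul_of_nonneg_right hexp (hb j)).trans hup,
    (mul_le_mul_of_nonneg_right hexp (hb k)).trans hdown⟩

lemma card_filter_abs_sub_le (s : Finset ℕ) {c d : ℝ} (hd : 0 ≤ d) :
    (#{k ∈ s | |c - (k : ℕ)| ≤ d} : ℝ) ≤ 2 * d + 1 := by
  set J := {k ∈ s | |c - (k : ℕ)| ≤ d}
  rcases J.eq_empty_or_nonempty with hJ | hJ
  · rw [hJ, card_empty, Nat.cast_zero]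
    linarith
  have hmin := abs_le.1 (mem_filter.1 (J.min'_mem hJ)).2
  have hmax := abs_le.1 (mem_filter.1 (J.max'_mem hJ)).2
  have hle : J.min' hJ ≤ J.max' hJ + 1 := (J.min'_le _ (J.max'_mem hJ)).trans (Nat.le_add_right _ 1)
  calc (#J : ℝ) ≤ #(Icc (J.min' hJ) (J.max' hJ)) := by
        exact_mod_cast card_le_card fun k hk ↦ mem_Icc.2 ⟨J.min'_le k hk, J.le_max' k hk⟩
    _ = J.max' hJ + 1 - J.min' hJ := by rw [Nat.card_Icc, Nat.cast_sub hle]; push_cast; ring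
    _ ≤ 2 * d + 1 := by linarith

theorem le_sum_Icc_bernsteinPolynomial_eval (hp₀ : 0 ≤ p) (hp₁ : p ≤ 1) {σ : ℝ} (hσ6 : 6 ≤ σ)
    (hσ : σ ^ 2 = n * p * (1 - p)) {r L : ℕ} (hr : n * p - 3 * σ ≤ r)
    (hrL : (r : ℝ) + L ≤ n * p + 3 * σ) (hL : σ ≤ L) :
    4 / 27 * exp (-72) ≤ ∑ k ∈ Icc r (r + L), (bernsteinPolynomial ℝ n k).eval p := by
  set b := fun k : ℕ ↦ (bernsteinPolynomial ℝ n k).eval p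
  set J := {k ∈ range (n + 1) | |n * p - (k : ℕ)| ≤ 3 * σ}
  have hJ : 8 / 9 ≤ ∑ j ∈ J, b j := by
    have := one_sub_inv_sq_le_sum_bernsteinPolynomial_eval hp₀ hp₁ (c := 3) (by norm_num)
      (by linarith) hσ
    norm_num at this
    linarith
  have hJcard : (#J : ℝ) ≤ 6 * σ + 1 := by
    have := card_filter_abs_sub_le (range (n + 1)) (c := n * p) (d := 3 * σ) (by linarith)
    linarith
  have hpoint : ∀ k ∈ Icc r (r + L), 8 / 9 * exp (-72) / (6 * σ + 1) ≤ b k := by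
    intro k hk
    obtain ⟨hrk, hkL⟩ := mem_Icc.1 hk
    have hrk' : (r : ℝ) ≤ k := by exact_mod_cast hrk
    have hkL' : (k : ℝ) ≤ r + L := by exact_mod_cast hkL
    have hk' : |n * p - k| ≤ 3 * σ := abs_le.2 ⟨by linarith, by linarith⟩
    rw [div_le_iff₀ (by linarith)]
    calc 8 / 9 * exp (-72) ≤ exp (-72) * ∑ j ∈ J, b j := by rw [mul_comm]; gcongr
      _ = ∑ j ∈ J, exp (-72) * b j := mul_sum _ _ _
      _ ≤ ∑ j ∈ J, b k := sum_le_sum fun j hj ↦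
          exp_neg_mul_bernsteinPolynomial_eval_le hp₀ hp₁ hσ6 hσ (mem_filter.1 hj).2 hk'
      _ = #J * b k := by rw [sum_const, nsmul_eq_mul]
      _ ≤ b k * (6 * σ + 1) := by
          rw [mul_comm]; gcongr; exact bernsteinPolynomial_eval_nonneg hp₀ hp₁ k
  calc 4 / 27 * exp (-72) ≤ (L + 1) * (8 / 9 * exp (-72) / (6 * σ + 1)) := by
        rw [mul_div_assoc', le_div_iff₀ (by linarith)]
        nlinarith [exp_pos (-72)]
    _ = #(Icc r (r + L)) • (8 / 9 * exp (-72) / (6 * σ + 1)) := by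
        rw [Nat.card_Icc, nsmul_eq_mul, show r + L + 1 - r = L + 1 by omega]
        push_cast
        ring
    _ ≤ ∑ k ∈ Icc r (r + L), b k := card_nsmul_le_sum _ _ _ hpoint

lemma le_sum_Icc_ceil_bernsteinPolynomial_eval (hp₀ : 0 ≤ p) (hp : p ≤ 1 / 2) {t : ℝ}
    (ht : 14 ≤ t) (hnp : n * p = t ^ 2 - t) :
    4 / 27 * exp (-72) ≤ ∑ k ∈ Icc (⌈t ^ 2⌉₊ + 3) (⌈t ^ 2⌉₊ + 3 + ⌈√(n * p * (1 - p))⌉₊),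
      (bernsteinPolynomial ℝ n k).eval p := by
  set σ := √(n * p * (1 - p))
  have hvar : (t ^ 2 - t) / 2 ≤ n * p * (1 - p) := by
    rw [hnp]
    nlinarith [mul_nonneg (by nlinarith : 0 ≤ t ^ 2 - t) (by linarith : 0 ≤ 1 / 2 - p)]
  have hσ : σ ^ 2 = n * p * (1 - p) := sq_sqrt (by nlinarith)
  have hσ6 : 6 ≤ σ := le_sqrt_of_sq_le (by nlinarith)
  have hσt : (t + 5) / 2 ≤ σ := le_sqrt_of_sq_le (by nlinarith)
  have hceil_t := Nat.ceil_lt_add_one (sq_nonneg t)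
  have hceil_σ := Nat.ceil_lt_add_one (by linarith : 0 ≤ σ)
  refine le_sum_Icc_bernsteinPolynomial_eval hp₀ (by linarith) hσ6 hσ ?_ ?_ (Nat.le_ceil σ)
  · push_cast
    linarith [Nat.le_ceil (t ^ 2)]
  · push_cast
    linarith

end Binomial

section RandomSubsets

variable {V : Type*} [DecidableEq V]

lemma sum_powerset_union_inter (p : ℝ) (g : Finset V → ℝ) {S U : Finset V}
    (hSU : Disjoint S U) :
    ∑ A ∈ (S ∪ U).powerset, g (A ∩ S) * (p ^ #A * (1 - p) ^ (#(S ∪ U) - #A))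
      = ∑ B ∈ S.powerset, g B * (p ^ #B * (1 - p) ^ (#S - #B)) := by
  induction U using Finset.induction_on with
  | empty =>
    rw [union_empty]
    exact sum_congr rfl fun B hB ↦ by rw [inter_eq_left.2 (mem_powerset.1 hB)]
  | insert v U hv ih =>
    have hvS : v ∉ S := disjoint_right.1 hSU (mem_insert_self v U)
    have hvSU : v ∉ S ∪ U := by simp [hvS, hv]
    rw [union_insert, sum_powerset_insert hvSU, ← ih (hSU.mono_right (subset_insert v U)),
      ← sum_add_distrib, card_insert_of_notMem hvSU]
    refine sum_congr rfl fun A hA ↦ ?_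
    have hAv : v ∉ A := fun h ↦ hvSU (mem_powerset.1 hA h)
    have hcard := card_le_card (mem_powerset.1 hA)
    rw [insert_inter_of_notMem hvS, card_insert_of_notMem hAv,
      show #(S ∪ U) + 1 - #A = #(S ∪ U) - #A + 1 by omega, Nat.add_sub_add_right]
    ring

variable [Fintype V]

lemma probEvent_mono {p : ℝ} (hp₀ : 0 ≤ p) (hp₁ : p ≤ 1) {E E' : Finset V → Prop}
    (h : ∀ A, E A → E' A) : probEvent p E ≤ probEvent p E' := by
  refine sum_le_sum fun A _ ↦ ?_
  have : 0 ≤ configProb p A := mul_nonneg (pow_nonneg hp₀ _) (pow_nonneg (sub_nonneg.2 hp₁) _)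
  split_ifs with hE hE'
  exacts [le_rfl, absurd (h A hE) hE', this, le_rfl]

lemma probEvent_card_inter_mem (p : ℝ) (S : Finset V) (I : Finset ℕ) :
    probEvent p (fun A ↦ #(A ∩ S) ∈ I) = ∑ j ∈ I, (bernsteinPolynomial ℝ #S j).eval p := by
  have h := sum_powerset_union_inter p (fun B ↦ if #B ∈ I then 1 else 0)
    (disjoint_sdiff (s := S) (t := univ))
  rw [union_sdiff_of_subset (subset_univ S), powerset_univ, card_univ] at h
  simp only [ite_mul, one_mul, zero_mul] at h
  have hI : probEvent p (fun A ↦ #(A ∩ S) ∈ I)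
      = ∑ B ∈ S.powerset, if #B ∈ I then p ^ #B * (1 - p) ^ (#S - #B) else 0 := by
    rw [← h, probEvent]
    exact sum_congr rfl fun A _ ↦ by simp only [configProb]; congr
  rw [hI, sum_powerset_apply_card (fun m ↦ if m ∈ I then p ^ m * (1 - p) ^ (#S - m) else 0)]
  calc ∑ m ∈ range (#S + 1), (#S).choose m • (if m ∈ I then p ^ m * (1 - p) ^ (#S - m) else 0)
      = ∑ m ∈ range (#S + 1), if m ∈ I then (bernsteinPolynomial ℝ #S m).eval p else 0 := by
        refine sum_congr rfl fun m _ ↦ ?_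
        split_ifs
        · simp only [bernsteinPolynomial, eval_mul, eval_pow, eval_natCast, eval_X, eval_sub,
            eval_one, nsmul_eq_mul]
          ring
        · exact smul_zero _
    _ = ∑ j ∈ range (#S + 1) ∩ I, (bernsteinPolynomial ℝ #S j).eval p := sum_ite_mem _ _ _
    _ = ∑ j ∈ I, (bernsteinPolynomial ℝ #S j).eval p := by
        refine sum_subset inter_subset_right fun j hjI hj ↦ ?_
        have hj : #S < j := by simpa [hjI] using hj
        rw [bernsteinPolynomial.eq_zero_of_lt ℝ hj, eval_zero]

end RandomSubsets

lemma rpow_eq_rpow_div_two_sq {x : ℝ} (hx : 0 ≤ x) (a : ℝ) : x ^ a = (x ^ (a / 2)) ^ 2 := by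
  rw [← rpow_natCast, ← rpow_mul hx]
  norm_num

lemma mul_rpow_sub_one_sub_rpow {x : ℝ} (hx : 0 < x) (a : ℝ) :
    x * (x ^ (a - 1) - x ^ (a / 2 - 1)) = (x ^ (a / 2)) ^ 2 - x ^ (a / 2) := by
  rw [rpow_sub_one hx.ne', rpow_sub_one hx.ne', rpow_eq_rpow_div_two_sq hx.le a]
  field_simp

lemma eventually_rpow_bounds {a : ℝ} (ha₀ : 0 < a) (ha₁ : a < 1) :
    ∀ᶠ n : ℕ in atTop, 0 < (n : ℝ) ∧ 0 < (n : ℝ) ^ (a - 1) - (n : ℝ) ^ (a / 2 - 1) ∧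
      (n : ℝ) ^ (a - 1) - (n : ℝ) ^ (a / 2 - 1) ≤ 1 / 2 ∧ 14 ≤ (n : ℝ) ^ (a / 2) := by
  have hsmall := (tendsto_rpow_neg_atTop (by linarith : 0 < 1 - a)).comp tendsto_natCast_atTop_atTop
  have hlarge := (tendsto_rpow_atTop (by linarith : 0 < a / 2)).comp tendsto_natCast_atTop_atTop
  rw [neg_sub] at hsmall
  filter_upwards [eventually_gt_atTop 1,
    hsmall.eventually (eventually_le_nhds (by norm_num : (0 : ℝ) < 1 / 2)),
    hlarge.eventually_ge_atTop 14] with n hn hsmall hlarge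
  have hn : (1 : ℝ) < n := by exact_mod_cast hn
  refine ⟨by linarith, sub_pos.2 (rpow_lt_rpow_of_exponent_lt hn (by linarith)), ?_, hlarge⟩
  have := rpow_nonneg (zero_le_one.trans hn.le) (a / 2 - 1)
  simp only [Function.comp_apply] at hsmall
  linarith

lemma hammingDist_update_not {ι : Type*} [Fintype ι] [DecidableEq ι] (x : ι → Bool) (i : ι) :
    hammingDist x (Function.update x i (!x i)) = 1 := by
  rw [hammingDist, card_eq_one]
  exact ⟨i, by ext j; by_cases h : j = i <;> simp [h]⟩

lemma exists_eq_update_not_of_hammingDist_eq_one {ι : Type*} [Fintype ι] [DecidableEq ι]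
    {x y : ι → Bool} (h : hammingDist x y = 1) : ∃ i, y = Function.update x i (!x i) := by
  obtain ⟨i, hi⟩ := card_eq_one.1 h
  refine ⟨i, funext fun j ↦ ?_⟩
  have hj : x j ≠ y j ↔ j = i := by simpa using congrArg (j ∈ ·) hi
  by_cases hji : j = i
  · subst hji
    cases hx : x j <;> cases hy : y j <;> simp_all
  · rw [Function.update_of_ne hji]
    exact (by simpa [hji] using hj : x j = y j).symm

lemma card_neighborFinset_cubeGraph_one (n : ℕ) (x : Fin n → Bool) :
    #((cubeGraph n 1).neighborFinset x) = n := by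
  have hadj : ∀ y, y ∈ (cubeGraph n 1).neighborFinset x ↔ hammingDist x y = 1 := fun y ↦ by
    rw [SimpleGraph.mem_neighborFinset]
    exact ⟨fun h ↦ le_antisymm h.2 h.1, fun h ↦ ⟨h.ge, h.le⟩⟩
  refine .symm <| (card_fin n).symm.trans ?_
  refine card_bij (fun i _ ↦ Function.update x i (!x i))
    (fun i _ ↦ (hadj _).2 (hammingDist_update_not x i)) (fun i _ j _ hij ↦ ?_)
    (fun y hy ↦ ?_)
  · by_contra hne
    simpa [Function.update_of_ne hne] using congrFun hij i
  · obtain ⟨i, rfl⟩ := exists_eq_update_not_of_hammingDist_eq_one ((hadj y).1 hy)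
    exact ⟨i, mem_univ i, rfl⟩

lemma mem_bootSets_one_of_le_card {V : Type*} [Fintype V] [DecidableEq V] {G : SimpleGraph V}
    {r : ℕ} {A : Finset V} {x : V} (h : r ≤ #(A ∩ G.neighborFinset x)) :
    x ∈ bootSets G r A 1 :=
  mem_union_right _ (mem_filter.2 ⟨mem_univ x, by rwa [inter_comm]⟩)

/-- For `3/4 < a < 1`, with initial infection probability
`p = n^{a-1} - n^{a/2-1}` and threshold `r = ⌈n^a⌉ + 3`, there is an absolute constant
`δ > 0` such that for all sufficiently large `n` and every vertex `x`,
`P(x ∈ A_{1,r}) ≥ δ`. -/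
theorem step_one_infection_prob_Qn (a : ℝ) (ha₁ : 3 / 4 < a) (ha₂ : a < 1) :
    ∃ δ : ℝ, 0 < δ ∧ ∃ n₀ : ℕ, ∀ n ≥ n₀, ∀ x : Fin n → Bool,
      δ ≤ probEvent ((n : ℝ) ^ (a - 1) - (n : ℝ) ^ (a / 2 - 1))
        (fun A0 => x ∈ bootSets (cubeGraph n 1) (⌈(n : ℝ) ^ a⌉₊ + 3) A0 1) := by
  obtain ⟨n₀, hn₀⟩ := eventually_atTop.1 (eventually_rpow_bounds (by linarith) ha₂)
  refine ⟨4 / 27 * exp (-72), by positivity, n₀, fun n hn x ↦ ?_⟩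
  obtain ⟨hn, hp₀, hp, ht⟩ := hn₀ n hn
  set p := (n : ℝ) ^ (a - 1) - (n : ℝ) ^ (a / 2 - 1)
  set t := (n : ℝ) ^ (a / 2)
  have hsq : (n : ℝ) ^ a = t ^ 2 := rpow_eq_rpow_div_two_sq hn.le a
  have hnp : n * p = t ^ 2 - t := mul_rpow_sub_one_sub_rpow hn a
  rw [hsq]
  calc 4 / 27 * exp (-72)
      ≤ ∑ k ∈ Icc (⌈t ^ 2⌉₊ + 3) (⌈t ^ 2⌉₊ + 3 + ⌈√(n * p * (1 - p))⌉₊),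
          (bernsteinPolynomial ℝ n k).eval p :=
        le_sum_Icc_ceil_bernsteinPolynomial_eval hp₀.le hp ht hnp
    _ = probEvent p (fun A ↦ #(A ∩ (cubeGraph n 1).neighborFinset x) ∈
          Icc (⌈t ^ 2⌉₊ + 3) (⌈t ^ 2⌉₊ + 3 + ⌈√(n * p * (1 - p))⌉₊)) := by
        rw [probEvent_card_inter_mem, card_neighborFinset_cubeGraph_one]
    _ ≤ _ := probEvent_mono hp₀.le (by linarith) fun A hA ↦
        mem_bootSets_one_of_le_card (mem_Icc.1 hA).1

end
end

section
/- Let k ∈ ℕ be a constant and let c > 0. Consider bootstrap percolation on Q_{2,n} with infection threshold ⌈N/2⌉, where N = n + C(n,2), and where each vertex is initially infected independently with some probability p. Suppose that for all sufficiently large n and every vertex x ∈ V(Q_{2,n}), P(x ∉ A_k) ≤ exp(−c·n^{0.1}). Then there exists a constant d > 0 such that for all sufficiently large n and every vertex x, P(x ∉ A_{3k+2}) ≤ exp(−d·n^{1.1}). -/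
open Finset Filter
open scoped Classical

noncomputable section

/-!
If `x` is uninfected at time `k + q`, it has fewer than `r` infected neighbours at time
`k + q - 1`; since flipping two of any `M` fixed coordinates already yields `C(M, 2) ≥ r`
neighbours, one of them is uninfected, and iterating gives a walk of length `q` from `x` to a
vertex uninfected at time `k` that flips `2q` fresh coordinates. Repeating this with fresh
coordinates gives `m ≈ n / (8q)` walks whose ends are pairwise at Hamming distance `4q`. For
`q = 2k + 2 > k` the balls of radius `2k` around the ends are disjoint, and "uninfected at time
`k`" only depends on the initial configuration in such a ball, so the `m` events are independent.
A union bound over the at most `n ^ (2qm)` choices of coordinates gives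
`(n ^ (2q) · exp (-c n^0.1)) ^ m = exp (-Ω(n^1.1))`.
-/

section Probability

variable {V : Type*}

/-- The probability that the configuration restricted to `B` is exactly `S`. -/
def configProbOn (p : ℝ) (B S : Finset V) : ℝ :=
  p ^ #S * (1 - p) ^ (#B - #S)

def probEventOn (p : ℝ) (B : Finset V) (E : Finset V → Prop) : ℝ :=
  ∑ S ∈ B.powerset, if E S then configProbOn p B S else 0

theorem probEventOn_true (p : ℝ) (B : Finset V) : probEventOn p B (fun _ => True) = 1 := by
  simp [probEventOn, configProbOn, Finset.sum_pow_mul_eq_add_pow]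

variable [DecidableEq V]

def EventDependsOn (B : Finset V) (E : Finset V → Prop) : Prop :=
  ∀ A A' : Finset V, A ∩ B = A' ∩ B → (E A ↔ E A')

theorem EventDependsOn.mono {B B' : Finset V} {E : Finset V → Prop} (hE : EventDependsOn B E)
    (hBB' : B ⊆ B') : EventDependsOn B' E := by
  intro A A' hAA'
  apply hE
  rw [← Finset.inter_eq_right.mpr hBB', ← Finset.inter_assoc, hAA', Finset.inter_assoc]

theorem EventDependsOn.forall_mem {ι : Type*} {s : Finset ι} {B : Finset V}
    {E : ι → Finset V → Prop} (hE : ∀ i ∈ s, EventDependsOn B (E i)) :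
    EventDependsOn B fun A => ∀ i ∈ s, E i A :=
  fun A A' hAA' => forall₂_congr fun i hi => hE i hi A A' hAA'

variable [Fintype V]

theorem probEvent_eq_probEventOn_univ (p : ℝ) (E : Finset V → Prop) :
    probEvent p E = probEventOn p univ E := by
  simp [probEvent, probEventOn, configProb, configProbOn, Finset.powerset_univ]

theorem probEvent_true (p : ℝ) : probEvent p (fun _ : Finset V => True) = 1 := by
  rw [probEvent_eq_probEventOn_univ, probEventOn_true]

theorem configProb_nonneg {p : ℝ} (hp : p ∈ Set.Icc (0 : ℝ) 1) (A : Finset V) :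
    0 ≤ configProb p A :=
  mul_nonneg (pow_nonneg hp.1 _) (pow_nonneg (sub_nonneg.mpr hp.2) _)

theorem probEvent_nonneg {p : ℝ} (hp : p ∈ Set.Icc (0 : ℝ) 1) (E : Finset V → Prop) :
    0 ≤ probEvent p E :=
  Finset.sum_nonneg fun A _ => by split_ifs <;> simp [configProb_nonneg hp]

theorem probEvent_congr (p : ℝ) {E E' : Finset V → Prop} (h : ∀ A, E A ↔ E' A) :
    probEvent p E = probEvent p E' := by
  simp only [probEvent, h]

theorem sum_eq_sum_powerset_sum_powerset_compl {M : Type*} [AddCommMonoid M]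
    (g : Finset V → M) (B : Finset V) :
    ∑ A, g A = ∑ S ∈ B.powerset, ∑ T ∈ Bᶜ.powerset, g (S ∪ T) := by
  rw [← Finset.sum_product']
  refine Finset.sum_nbij' (fun A => (A ∩ B, A ∩ Bᶜ)) (fun ST => ST.1 ∪ ST.2) ?_ ?_ ?_ ?_ ?_
  · simp
  · simp
  · intro A _
    simp [← Finset.inter_union_distrib_left]
  · rintro ⟨S, T⟩ hST
    simp only [Finset.mem_product, Finset.mem_powerset] at hST
    ext a <;> simp only [Finset.mem_inter, Finset.mem_union, Finset.mem_compl] <;>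
      grind [Finset.mem_compl]
  · intro A _
    simp [← Finset.inter_union_distrib_left]

theorem configProb_union (p : ℝ) {B S T : Finset V} (hS : S ⊆ B) (hT : T ⊆ Bᶜ) :
    configProb p (S ∪ T) = configProbOn p B S * configProbOn p Bᶜ T := by
  have hST : Disjoint S T :=
    Finset.disjoint_of_subset_left hS (Finset.disjoint_of_subset_right hT disjoint_compl_right)
  have hSB := Finset.card_le_card hS
  have hTB := Finset.card_le_card hT
  have hB := Finset.card_compl B
  have hBV := Finset.card_le_univ B
  rw [configProb, configProbOn, configProbOn, Finset.card_union_of_disjoint hST,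
    show Fintype.card V - (#S + #T) = (#B - #S) + (#Bᶜ - #T) by omega]
  ring

theorem probEvent_and_eq_mul_probEventOn (p : ℝ) {B : Finset V} {E F : Finset V → Prop}
    (hE : EventDependsOn B E) (hF : EventDependsOn Bᶜ F) :
    probEvent p (fun A => E A ∧ F A) = probEventOn p B E * probEventOn p Bᶜ F := by
  rw [probEvent, sum_eq_sum_powerset_sum_powerset_compl _ B, probEventOn, probEventOn,
    Finset.sum_mul_sum]
  refine Finset.sum_congr rfl fun S hS => Finset.sum_congr rfl fun T hT => ?_
  rw [Finset.mem_powerset] at hS hT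
  have hES : E (S ∪ T) ↔ E S := hE _ _ <| by
    rw [Finset.union_inter_distrib_right, Finset.disjoint_iff_inter_eq_empty.mp
      (Finset.disjoint_of_subset_left hT disjoint_compl_left), Finset.union_empty]
  have hFT : F (S ∪ T) ↔ F T := hF _ _ <| by
    rw [Finset.union_inter_distrib_right, Finset.disjoint_iff_inter_eq_empty.mp
      (Finset.disjoint_of_subset_left hS disjoint_compl_right), Finset.empty_union]
  rw [configProb_union p hS hT]
  by_cases hE' : E S <;> by_cases hF' : F T <;> simp [hES, hFT, hE', hF']

theorem probEvent_eq_probEventOn {p : ℝ} {B : Finset V} {E : Finset V → Prop}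
    (hE : EventDependsOn B E) : probEvent p E = probEventOn p B E := by
  rw [probEvent_congr p (E' := fun A => E A ∧ True) (by simp),
    probEvent_and_eq_mul_probEventOn p hE (fun _ _ _ => Iff.rfl), probEventOn_true, mul_one]

theorem probEvent_and_of_eventDependsOn {p : ℝ} {B : Finset V} {E F : Finset V → Prop}
    (hE : EventDependsOn B E) (hF : EventDependsOn Bᶜ F) :
    probEvent p (fun A => E A ∧ F A) = probEvent p E * probEvent p F := by
  rw [probEvent_and_eq_mul_probEventOn p hE hF, probEvent_eq_probEventOn hE,
    probEvent_eq_probEventOn hF]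

theorem probEvent_forall_mem_eq_prod {ι : Type*} [DecidableEq ι] (p : ℝ) (s : Finset ι)
    {B : ι → Finset V} {E : ι → Finset V → Prop} (hB : (s : Set ι).PairwiseDisjoint B)
    (hE : ∀ i ∈ s, EventDependsOn (B i) (E i)) :
    probEvent p (fun A => ∀ i ∈ s, E i A) = ∏ i ∈ s, probEvent p (E i) := by
  induction s using Finset.induction_on with
  | empty => simpa using probEvent_true p
  | insert a s ha ih =>
    rw [Finset.coe_insert] at hB
    have hrest : EventDependsOn (B a)ᶜ fun A => ∀ i ∈ s, E i A :=
      EventDependsOn.forall_mem fun i hi =>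
        (hE i (Finset.mem_insert_of_mem hi)).mono <|
          Finset.subset_compl_iff_disjoint_right.mpr <|
            hB (Set.mem_insert_of_mem _ hi) (Set.mem_insert _ _) (ne_of_mem_of_not_mem hi ha)
    rw [probEvent_congr p (fun A => Finset.forall_mem_insert a s (E · A)),
      probEvent_and_of_eventDependsOn (hE a (Finset.mem_insert_self a s)) hrest,
      ih (hB.subset (Set.subset_insert _ _)) fun i hi => hE i (Finset.mem_insert_of_mem hi),
      Finset.prod_insert ha]

theorem probEvent_le_sum {ι : Type*} {p : ℝ} (hp : p ∈ Set.Icc (0 : ℝ) 1)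
    {E : Finset V → Prop} (T : Finset ι) (F : ι → Finset V → Prop)
    (hcov : ∀ A, E A → ∃ i ∈ T, F i A) :
    probEvent p E ≤ ∑ i ∈ T, probEvent p (F i) := by
  simp only [probEvent]
  rw [Finset.sum_comm]
  refine Finset.sum_le_sum fun A _ => ?_
  have hterm : ∀ i ∈ T, 0 ≤ if F i A then configProb p A else 0 := fun i _ => by
    split_ifs <;> simp [configProb_nonneg hp]
  split_ifs with hEA
  · obtain ⟨i, hi, hFi⟩ := hcov A hEA
    simpa [hFi] using Finset.single_le_sum hterm hi
  · exact Finset.sum_nonneg hterm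

end Probability

section Bootstrap

variable {V : Type*} [Fintype V] [DecidableEq V]

theorem mem_bootSets_succ {G : SimpleGraph V} {r : ℕ} {A0 : Finset V} {i : ℕ} {v : V} :
    v ∈ bootSets G r A0 (i + 1) ↔
      v ∈ bootSets G r A0 i ∨ r ≤ #(G.neighborFinset v ∩ bootSets G r A0 i) := by
  simp [bootSets]

theorem mem_bootSets_congr (G : SimpleGraph V) (r : ℕ) {A A' : Finset V} (j : ℕ) {v : V}
    (h : ∀ w, G.edist v w ≤ j → (w ∈ A ↔ w ∈ A')) :
    v ∈ bootSets G r A j ↔ v ∈ bootSets G r A' j := by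
  induction j generalizing v with
  | zero => exact h v (by simp)
  | succ j ih =>
    have hv := ih fun w hw => h w (hw.trans (by norm_cast; omega))
    have hN : G.neighborFinset v ∩ bootSets G r A j =
        G.neighborFinset v ∩ bootSets G r A' j := by
      ext w
      simp only [Finset.mem_inter, SimpleGraph.mem_neighborFinset]
      refine and_congr_right fun hvw => ih fun u hu => h u ?_
      calc G.edist v u ≤ G.edist v w + G.edist w u := G.edist_triangle
        _ ≤ 1 + j := add_le_add (G.edist_eq_one_iff_adj.mpr hvw).le hu
        _ = ↑(j + 1) := by push_cast; ring
    rw [mem_bootSets_succ, mem_bootSets_succ, hv, hN]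

theorem eventDependsOn_not_mem_bootSets (G : SimpleGraph V) (r : ℕ) {v : V} {j : ℕ}
    {B : Finset V} (hB : ∀ w, G.edist v w ≤ j → w ∈ B) :
    EventDependsOn B fun A => v ∉ bootSets G r A j := fun A A' hAA' =>
  not_congr <| mem_bootSets_congr G r j fun w hw => by
    simpa [hB w hw] using congrArg (w ∈ ·) hAA'

theorem exists_not_mem_bootSets_of_le_card {G : SimpleGraph V} {r : ℕ} {A0 : Finset V}
    {j : ℕ} {v : V} (hv : v ∉ bootSets G r A0 (j + 1)) {I : Finset V} (hI : I ⊆ G.neighborFinset v)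
    (hr : r ≤ #I) : ∃ w ∈ I, w ∉ bootSets G r A0 j := by
  by_contra! h
  rw [mem_bootSets_succ, not_or, not_le] at hv
  exact hv.2.not_ge <| hr.trans <| Finset.card_le_card fun w hw =>
    Finset.mem_inter.mpr ⟨hI hw, h w hw⟩

end Bootstrap

section Cube

variable {n : ℕ}

def flipSet (x : Fin n → Bool) (S : Finset (Fin n)) : Fin n → Bool :=
  fun i => if i ∈ S then !x i else x i

theorem flipSet_empty (x : Fin n → Bool) : flipSet x ∅ = x := by
  funext i
  simp [flipSet]

theorem flipSet_flipSet (x : Fin n → Bool) {S T : Finset (Fin n)} (hST : Disjoint S T) :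
    flipSet (flipSet x S) T = flipSet x (S ∪ T) := by
  funext i
  have hST' : i ∈ S → i ∉ T := fun h => Finset.disjoint_left.mp hST h
  by_cases hS : i ∈ S <;> by_cases hT : i ∈ T <;> simp_all [flipSet]

theorem hammingDist_flipSet (x : Fin n → Bool) (S T : Finset (Fin n)) :
    hammingDist (flipSet x S) (flipSet x T) = #(symmDiff S T) := by
  rw [hammingDist]
  congr 1
  ext i
  simp only [Finset.mem_filter, Finset.mem_univ, true_and, Finset.mem_symmDiff]
  by_cases hS : i ∈ S <;> by_cases hT : i ∈ T <;> simp [flipSet, hS, hT]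

theorem hammingDist_flipSet_of_disjoint (x : Fin n → Bool) {S T : Finset (Fin n)}
    (hST : Disjoint S T) : hammingDist (flipSet x S) (flipSet x T) = #S + #T := by
  rw [hammingDist_flipSet, hST.symmDiff_eq_sup, Finset.sup_eq_union,
    Finset.card_union_of_disjoint hST]

theorem hammingDist_self_flipSet (x : Fin n → Bool) (S : Finset (Fin n)) :
    hammingDist x (flipSet x S) = #S := by
  simpa [flipSet_empty] using hammingDist_flipSet_of_disjoint x (Finset.disjoint_empty_left S)

theorem flipSet_injective (x : Fin n → Bool) : Function.Injective (flipSet x) := fun S T h => by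
  have h0 := congrArg (hammingDist (flipSet x S)) h
  rwa [hammingDist_self, hammingDist_flipSet, eq_comm, Finset.card_eq_zero,
    ← Finset.bot_eq_empty, symmDiff_eq_bot] at h0

theorem hammingDist_le_of_walk {s : ℕ} {v w : Fin n → Bool} (p : (cubeGraph n s).Walk v w) :
    hammingDist v w ≤ s * p.length := by
  induction p with
  | nil => simp
  | @cons u v w h p ih =>
    have h' : hammingDist u v ≤ s := h.2
    rw [SimpleGraph.Walk.length_cons, mul_add_one]
    exact (hammingDist_triangle u v w).trans (by omega)

theorem hammingDist_le_of_edist_le {s j : ℕ} {v w : Fin n → Bool}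
    (h : (cubeGraph n s).edist v w ≤ j) : hammingDist v w ≤ s * j := by
  obtain ⟨p, hp⟩ :=
    SimpleGraph.exists_walk_of_edist_ne_top (h.trans_lt (ENat.natCast_lt_top j)).ne
  rw [← hp, Nat.cast_le] at h
  exact (hammingDist_le_of_walk p).trans (Nat.mul_le_mul_left s h)

theorem eventDependsOn_not_mem_bootSets_cubeGraph (r k : ℕ) (v : Fin n → Bool) :
    EventDependsOn ({w | hammingDist v w ≤ 2 * k} : Finset (Fin n → Bool))
      fun A => v ∉ bootSets (cubeGraph n 2) r A k :=
  eventDependsOn_not_mem_bootSets _ r fun _ hw => by simpa using hammingDist_le_of_edist_le hw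

variable {r j : ℕ} {A0 : Finset (Fin n → Bool)}

/-- Flipping two of the coordinates in `Φ` gives `C(#Φ, 2)` distinct neighbours of `v`. -/
theorem exists_pair_flipSet_not_mem_bootSets {v : Fin n → Bool} {Φ : Finset (Fin n)}
    (hv : v ∉ bootSets (cubeGraph n 2) r A0 (j + 1)) (hr : r ≤ (#Φ).choose 2) :
    ∃ P ⊆ Φ, #P = 2 ∧ flipSet v P ∉ bootSets (cubeGraph n 2) r A0 j := by
  have hI : (Φ.powersetCard 2).image (flipSet v) ⊆ (cubeGraph n 2).neighborFinset v := by
    simp only [Finset.image_subset_iff, Finset.mem_powersetCard, SimpleGraph.mem_neighborFinset]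
    rintro P ⟨-, hP⟩
    show 1 ≤ _ ∧ _ ≤ 2
    rw [hammingDist_self_flipSet, hP]
    omega
  obtain ⟨w, hw, hwA⟩ := exists_not_mem_bootSets_of_le_card hv hI <| by
    rwa [Finset.card_image_of_injective _ (flipSet_injective v), Finset.card_powersetCard]
  obtain ⟨P, hP, rfl⟩ := Finset.mem_image.mp hw
  exact ⟨P, (Finset.mem_powersetCard.mp hP).1, (Finset.mem_powersetCard.mp hP).2, hwA⟩

theorem exists_flipSet_not_mem_bootSets (q : ℕ) {v : Fin n → Bool} {Φ : Finset (Fin n)}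
    (hv : v ∉ bootSets (cubeGraph n 2) r A0 (j + q)) (hr : r ≤ (#Φ - 2 * q).choose 2) :
    ∃ S ⊆ Φ, #S = 2 * q ∧ flipSet v S ∉ bootSets (cubeGraph n 2) r A0 j := by
  induction q generalizing v Φ with
  | zero => exact ⟨∅, Finset.empty_subset _, rfl, by rwa [flipSet_empty]⟩
  | succ q ih =>
    obtain ⟨P, hPΦ, hP, hvP⟩ := exists_pair_flipSet_not_mem_bootSets (Φ := Φ) hv
      (hr.trans (Nat.choose_le_choose 2 (Nat.sub_le _ _)))
    obtain ⟨S, hSΦ, hS, hvS⟩ := ih (Φ := Φ \ P) hvP <| by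
      rwa [Finset.card_sdiff_of_subset hPΦ, hP, Nat.sub_sub, ← mul_one_add, add_comm 1]
    have hPS : Disjoint P S := Finset.disjoint_of_subset_right hSΦ Finset.disjoint_sdiff
    refine ⟨P ∪ S, Finset.union_subset hPΦ (hSΦ.trans Finset.sdiff_subset), ?_, ?_⟩
    · rw [Finset.card_union_of_disjoint hPS, hP, hS]
      ring
    · rwa [← flipSet_flipSet v hPS]

theorem exists_disjoint_flipSets_not_mem_bootSets {q : ℕ} (hq : 0 < q) {x : Fin n → Bool}
    (hx : x ∉ bootSets (cubeGraph n 2) r A0 (j + q)) (m : ℕ) {Φ : Finset (Fin n)}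
    (hr : r ≤ (#Φ - 2 * q * m).choose 2) :
    ∃ 𝒮 : Finset (Finset (Fin n)), #𝒮 = m ∧ (𝒮 : Set (Finset (Fin n))).PairwiseDisjoint id ∧
      ∀ S ∈ 𝒮, S ⊆ Φ ∧ #S = 2 * q ∧ flipSet x S ∉ bootSets (cubeGraph n 2) r A0 j := by
  induction m generalizing Φ with
  | zero => exact ⟨∅, by simp⟩
  | succ m ih =>
    obtain ⟨S₀, hS₀Φ, hS₀, hxS₀⟩ := exists_flipSet_not_mem_bootSets q hx <| hr.trans <|
      Nat.choose_le_choose 2 <| Nat.sub_le_sub_left (Nat.le_mul_of_pos_right _ m.succ_pos) _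
    obtain ⟨𝒮, h𝒮, hdisj, h𝒮Φ⟩ := ih (Φ := Φ \ S₀) <| by
      rwa [Finset.card_sdiff_of_subset hS₀Φ, hS₀, Nat.sub_sub, add_comm, ← mul_add_one]
    have hS₀disj : ∀ S ∈ 𝒮, Disjoint S₀ S := fun S hS =>
      Finset.disjoint_of_subset_right (h𝒮Φ S hS).1 Finset.disjoint_sdiff
    have hS₀𝒮 : S₀ ∉ 𝒮 := fun h => by
      have := hS₀disj S₀ h
      rw [disjoint_self, Finset.bot_eq_empty] at this
      rw [this, Finset.card_empty] at hS₀
      omega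
    refine ⟨insert S₀ 𝒮, by rw [Finset.card_insert_of_notMem hS₀𝒮, h𝒮], ?_, ?_⟩
    · rw [Finset.coe_insert]
      exact hdisj.insert fun S hS _ => hS₀disj S hS
    · rw [Finset.forall_mem_insert]
      exact ⟨⟨hS₀Φ, hS₀, hxS₀⟩, fun S hS =>
        ⟨(h𝒮Φ S hS).1.trans Finset.sdiff_subset, (h𝒮Φ S hS).2⟩⟩

/-- Ends of walks with disjoint flip sets of size `2q > 2k` are more than `4k` apart, so the
balls of radius `2k` that decide the events are disjoint. -/
theorem probEvent_forall_flipSet_not_mem_bootSets_le {p ε : ℝ} (hp : p ∈ Set.Icc (0 : ℝ) 1)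
    {k q : ℕ} (hkq : k < q) (x : Fin n → Bool) {𝒮 : Finset (Finset (Fin n))}
    (hdisj : (𝒮 : Set (Finset (Fin n))).PairwiseDisjoint id) (hcard : ∀ S ∈ 𝒮, #S = 2 * q)
    (hε : ∀ y, probEvent p (fun A => y ∉ bootSets (cubeGraph n 2) r A k) ≤ ε) :
    probEvent p (fun A => ∀ S ∈ 𝒮, flipSet x S ∉ bootSets (cubeGraph n 2) r A k) ≤
      ε ^ #𝒮 := by
  have hballs : (𝒮 : Set (Finset (Fin n))).PairwiseDisjoint fun S =>
      ({w | hammingDist (flipSet x S) w ≤ 2 * k} : Finset (Fin n → Bool)) := by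
    intro S hS S' hS' hSS'
    rw [Function.onFun, Finset.disjoint_left]
    intro w hw hw'
    simp only [Finset.mem_filter, Finset.mem_univ, true_and] at hw hw'
    have hdist :=
      hammingDist_flipSet_of_disjoint x (show Disjoint S S' from hdisj hS hS' hSS')
    have htri := hammingDist_triangle (flipSet x S) w (flipSet x S')
    rw [hammingDist_comm w] at htri
    rw [hcard S hS, hcard S' hS'] at hdist
    omega
  rw [probEvent_forall_mem_eq_prod p 𝒮 hballs fun S _ =>
    eventDependsOn_not_mem_bootSets_cubeGraph r k (flipSet x S)]
  calc ∏ S ∈ 𝒮, probEvent p (fun A => flipSet x S ∉ bootSets (cubeGraph n 2) r A k)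
      ≤ ∏ _S ∈ 𝒮, ε := Finset.prod_le_prod (fun _ _ => probEvent_nonneg hp _) fun S _ => hε _
    _ = ε ^ #𝒮 := Finset.prod_const ε

theorem probEvent_not_mem_bootSets_add_le {p ε : ℝ} (hp : p ∈ Set.Icc (0 : ℝ) 1)
    {k q m : ℕ} (hkq : k < q) (hr : r ≤ (n - 2 * q * m).choose 2)
    (hε : ∀ y, probEvent p (fun A => y ∉ bootSets (cubeGraph n 2) r A k) ≤ ε)
    (x : Fin n → Bool) :
    probEvent p (fun A => x ∉ bootSets (cubeGraph n 2) r A (k + q)) ≤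
      ((n : ℝ) ^ (2 * q) * ε) ^ m := by
  set T := ((Finset.univ.powersetCard (2 * q)).powersetCard m).filter
    fun 𝒮 : Finset (Finset (Fin n)) => (𝒮 : Set (Finset (Fin n))).PairwiseDisjoint id
  have hε0 : 0 ≤ ε := (probEvent_nonneg hp _).trans (hε x)
  have hT : (#T : ℝ) ≤ ((n : ℝ) ^ (2 * q)) ^ m := by
    have : #T ≤ (n ^ (2 * q)) ^ m := by
      refine (Finset.card_filter_le _ _).trans ?_
      rw [Finset.card_powersetCard, Finset.card_powersetCard, Finset.card_univ,
        Fintype.card_fin]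
      exact (Nat.choose_le_pow _ _).trans (Nat.pow_le_pow_left (Nat.choose_le_pow _ _) _)
    exact_mod_cast this
  calc probEvent p (fun A => x ∉ bootSets (cubeGraph n 2) r A (k + q))
      ≤ ∑ 𝒮 ∈ T,
          probEvent p (fun A => ∀ S ∈ 𝒮, flipSet x S ∉ bootSets (cubeGraph n 2) r A k) :=
        probEvent_le_sum hp T _ fun A hA => by
          obtain ⟨𝒮, h𝒮, hdisj, hS⟩ :=
            exists_disjoint_flipSets_not_mem_bootSets (by omega) hA m (Φ := Finset.univ)
              (by simpa using hr)
          have h𝒮sub : 𝒮 ⊆ Finset.univ.powersetCard (2 * q) := fun S hS' =>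
            Finset.mem_powersetCard.mpr ⟨Finset.subset_univ _, (hS S hS').2.1⟩
          exact ⟨𝒮, Finset.mem_filter.mpr ⟨Finset.mem_powersetCard.mpr ⟨h𝒮sub, h𝒮⟩, hdisj⟩,
            fun S hS' => (hS S hS').2.2⟩
    _ ≤ ∑ _𝒮 ∈ T, ε ^ m := Finset.sum_le_sum fun 𝒮 h𝒮 => by
        obtain ⟨h𝒮, hdisj⟩ := Finset.mem_filter.mp h𝒮
        obtain ⟨h𝒮sub, rfl⟩ := Finset.mem_powersetCard.mp h𝒮
        exact probEvent_forall_flipSet_not_mem_bootSets_le hp hkq x hdisj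
          (fun S hS => (Finset.mem_powersetCard.mp (h𝒮sub hS)).2) hε
    _ = #T * ε ^ m := by rw [Finset.sum_const, nsmul_eq_mul]
    _ ≤ ((n : ℝ) ^ (2 * q)) ^ m * ε ^ m := mul_le_mul_of_nonneg_right hT (pow_nonneg hε0 m)
    _ = ((n : ℝ) ^ (2 * q) * ε) ^ m := (mul_pow _ _ _).symm

end Cube

theorem ceil_half_add_choose_two_le_choose_two {n M : ℕ} (hn : 20 ≤ n) (hM : 3 * n ≤ 4 * M) :
    ⌈((n + n.choose 2 : ℕ) : ℝ) / 2⌉₊ ≤ M.choose 2 := by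
  rw [Nat.ceil_le]
  push_cast
  rw [Nat.cast_choose_two, Nat.cast_choose_two]
  have hn' : (20 : ℝ) ≤ n := by exact_mod_cast hn
  have hM' : (3 * n : ℝ) ≤ 4 * M := by exact_mod_cast hM
  nlinarith [mul_nonneg (sub_nonneg.mpr hM') (by linarith : (0 : ℝ) ≤ 4 * M + 3 * n - 4)]

theorem eventually_pow_mul_exp_pow_le {c : ℝ} (hc : 0 < c) {q : ℕ} (hq : 0 < q) :
    ∀ᶠ n : ℕ in atTop, ∀ m : ℕ, (n : ℝ) ≤ 16 * q * m →
      ((n : ℝ) ^ (2 * q) * Real.exp (-c * (n : ℝ) ^ (0.1 : ℝ))) ^ m ≤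
        Real.exp (-(c / (32 * q)) * (n : ℝ) ^ (1.1 : ℝ)) := by
  have hlog : ∀ᶠ x : ℝ in atTop, ‖2 * q * Real.log x‖ ≤ c / 2 * ‖x ^ (0.1 : ℝ)‖ :=
    ((isLittleO_log_rpow_atTop (by norm_num)).const_mul_left _).bound (by positivity)
  filter_upwards [tendsto_natCast_atTop_atTop.eventually hlog,
    Filter.eventually_ge_atTop 1] with n hn hn1 m hm
  have hn0 : (0 : ℝ) < n := by exact_mod_cast hn1
  have hz : 0 ≤ (n : ℝ) ^ (0.1 : ℝ) := Real.rpow_nonneg hn0.le _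
  rw [Real.norm_of_nonneg hz, Real.norm_eq_abs] at hn
  have hbase : (n : ℝ) ^ (2 * q) * Real.exp (-c * (n : ℝ) ^ (0.1 : ℝ)) ≤
      Real.exp (-(c / 2) * (n : ℝ) ^ (0.1 : ℝ)) := by
    rw [← Real.exp_log (pow_pos hn0 _), ← Real.exp_add, Real.exp_le_exp, Real.log_pow]
    push_cast
    linarith [le_abs_self (2 * q * Real.log n)]
  have hm' : c / (32 * q) * n ≤ c / 2 * m := by
    rw [div_mul_eq_mul_div, div_le_iff₀ (by positivity)]
    nlinarith
  calc ((n : ℝ) ^ (2 * q) * Real.exp (-c * (n : ℝ) ^ (0.1 : ℝ))) ^ m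
      ≤ Real.exp (-(c / 2) * (n : ℝ) ^ (0.1 : ℝ)) ^ m :=
        pow_le_pow_left₀ (by positivity) hbase m
    _ = Real.exp (-(c / 2 * m * (n : ℝ) ^ (0.1 : ℝ))) := by rw [← Real.exp_nat_mul]; ring_nf
    _ ≤ Real.exp (-(c / (32 * q)) * (n : ℝ) ^ (1.1 : ℝ)) := by
      rw [Real.exp_le_exp, show (1.1 : ℝ) = 1 + 0.1 by norm_num, Real.rpow_one_add' hn0.le
        (by norm_num)]
      nlinarith [mul_le_mul_of_nonneg_right hm' hz]

/-- Let `k ∈ ℕ` and `c > 0`, and consider bootstrap percolation on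
`Q_{2,n}` with threshold `⌈N/2⌉` (where `N = n + C(n,2)`) and initial infection probability
`p = p(n)`.  If for all sufficiently large `n` every vertex satisfies
`P(x ∉ A_k) ≤ exp(-c n^{0.1})`, then there is a constant `d > 0` such that for all
sufficiently large `n` every vertex satisfies `P(x ∉ A_{3k+2}) ≤ exp(-d n^{1.1})`. -/
theorem boost_uninfected_prob_Q2n (k : ℕ) (c : ℝ) (hc : 0 < c) (p : ℕ → ℝ)
    (hp : ∀ n, p n ∈ Set.Icc (0 : ℝ) 1)
    (h : ∃ n₀ : ℕ, ∀ n ≥ n₀, ∀ x : Fin n → Bool,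
      probEvent (p n) (fun A0 => x ∉ bootSets (cubeGraph n 2)
        ⌈((n + n.choose 2 : ℕ) : ℝ) / 2⌉₊ A0 k) ≤
        Real.exp (-c * (n : ℝ) ^ ((0.1 : ℝ)))) :
    ∃ d : ℝ, 0 < d ∧ ∃ n₁ : ℕ, ∀ n ≥ n₁, ∀ x : Fin n → Bool,
      probEvent (p n) (fun A0 => x ∉ bootSets (cubeGraph n 2)
        ⌈((n + n.choose 2 : ℕ) : ℝ) / 2⌉₊ A0 (3 * k + 2)) ≤
        Real.exp (-d * (n : ℝ) ^ ((1.1 : ℝ))) := by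
  obtain ⟨n₀, h₀⟩ := h
  set q := 2 * k + 2
  obtain ⟨n₁, hn₁⟩ :=
    Filter.eventually_atTop.mp (eventually_pow_mul_exp_pow_le hc (q := q) (by omega))
  refine ⟨c / (32 * q), by positivity, max (max n₀ n₁) (16 * q), fun n hn x => ?_⟩
  simp only [ge_iff_le, max_le_iff] at hn
  -- `m` walks of length `q` use `2qm ≤ n / 4` of the `n` coordinates
  set m := n / (8 * q)
  have hm : 8 * q * m ≤ n := Nat.mul_div_le n (8 * q)
  have hm' : n ≤ 16 * q * m := by
    have h1 : n < m * (8 * q) + 8 * q := Nat.lt_div_mul_add (by omega)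
    have h2 : 1 ≤ m := Nat.div_pos (by omega) (by omega)
    nlinarith
  have hr := ceil_half_add_choose_two_le_choose_two (n := n) (M := n - 2 * q * m) (by omega)
    (by rw [show 8 * q * m = 4 * (2 * q * m) by ring] at hm; omega)
  rw [show 3 * k + 2 = k + q by omega]
  calc _ ≤ ((n : ℝ) ^ (2 * q) * Real.exp (-c * (n : ℝ) ^ (0.1 : ℝ))) ^ m :=
        probEvent_not_mem_bootSets_add_le (hp n) (by omega) hr (h₀ n hn.1.1) x
    _ ≤ _ := hn₁ n hn.1.2 m (by exact_mod_cast hm')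

end
end
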